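/- Let F be a field and let M(x)=[A(x)|B(x)] be a bipartite pattern matrix in n unknowns with generic ranks r_A, r_B, r_M. Let 𝒜 be a largest left matchbox and ℬ a largest right matchbox such that v(𝒜,ℬ) is minimal among all pairs consisting of a largest left matchbox and a largest right matchbox, and let f_{𝒜ℬ}(x) = LCM{μ_𝒜(x), μ_ℬ(x), μ_{𝒜⋓ℬ}(x)}. Then for every a ∈ Fⁿ with f_{𝒜ℬ}(a) ≠ 0 one has rank A(a) = r_A, rank B(a) = r_B, and rank M(a) = r_M. -/

import Mathlib

open Matrix

/-- A position in the bipartite pattern: either an entry of the `m × p` A-block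
or an entry of the `m × q` B-block. -/
abbrev BipPos (m p q : ℕ) := (Fin m × Fin p) ⊕ (Fin m × Fin q)

/-- The row index of a position. -/
def posRow {m p q : ℕ} : BipPos m p q → Fin m := Sum.elim Prod.fst Prod.fst

/-- The column index of a position (as a column of the block matrix `[A|B]`). -/
def posCol {m p q : ℕ} : BipPos m p q → Fin p ⊕ Fin q := Sum.map Prod.snd Prod.snd

/-- The A-block of the pattern matrix, at the substitution `a`. -/
def patA {m p q n : ℕ} (pos : Fin n → BipPos m p q) {R : Type*} [CommRing R]
    (a : Fin n → R) : Matrix (Fin m) (Fin p) R :=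
  Matrix.of fun i j => ∑ l : Fin n, if pos l = Sum.inl (i, j) then a l else 0

/-- The B-block of the pattern matrix, at the substitution `a`. -/
def patB {m p q n : ℕ} (pos : Fin n → BipPos m p q) {R : Type*} [CommRing R]
    (a : Fin n → R) : Matrix (Fin m) (Fin q) R :=
  Matrix.of fun i k => ∑ l : Fin n, if pos l = Sum.inr (i, k) then a l else 0

/-- The full bipartite pattern matrix `M = [A | B]` at the substitution `a`. -/
def patM {m p q n : ℕ} (pos : Fin n → BipPos m p q) {R : Type*} [CommRing R]
    (a : Fin n → R) : Matrix (Fin m) (Fin p ⊕ Fin q) R :=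
  Matrix.fromCols (patA pos a) (patB pos a)

/-- The generic point: the variables `x₁, …, xₙ` viewed in the field
`K = F(x₁,…,xₙ)` of rational functions. -/
noncomputable def genericX (F : Type*) [Field F] (n : ℕ) :
    Fin n → FractionRing (MvPolynomial (Fin n) F) :=
  fun l => algebraMap (MvPolynomial (Fin n) F) (FractionRing (MvPolynomial (Fin n) F))
    (MvPolynomial.X l)

/-- The generic rank `r_A` of the A-block. -/
noncomputable def genRankA (F : Type*) [Field F] {m p q n : ℕ}
    (pos : Fin n → BipPos m p q) : ℕ :=
  (patA pos (genericX F n)).rank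

/-- The generic rank `r_B` of the B-block. -/
noncomputable def genRankB (F : Type*) [Field F] {m p q n : ℕ}
    (pos : Fin n → BipPos m p q) : ℕ :=
  (patB pos (genericX F n)).rank

/-- The generic rank `r_M` of `M = [A | B]`. -/
noncomputable def genRankM (F : Type*) [Field F] {m p q n : ℕ}
    (pos : Fin n → BipPos m p q) : ℕ :=
  (patM pos (genericX F n)).rank

/-- Equivalence of bipartite matrices: `[A'|B'] = [S·A·R₁ | S·B·R₂]` with
`S, R₁, R₂` invertible. -/
def BipEquiv {F : Type*} [Field F] {m p q : ℕ}
    (A : Matrix (Fin m) (Fin p) F) (B : Matrix (Fin m) (Fin q) F)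
    (A' : Matrix (Fin m) (Fin p) F) (B' : Matrix (Fin m) (Fin q) F) : Prop :=
  ∃ (S : Matrix (Fin m) (Fin m) F) (R₁ : Matrix (Fin p) (Fin p) F)
    (R₂ : Matrix (Fin q) (Fin q) F),
    IsUnit S ∧ IsUnit R₁ ∧ IsUnit R₂ ∧ A' = S * A * R₁ ∧ B' = S * B * R₂

/-- The A-block of the canonical bipartite matrix `C(r,s,t)`:
`I_r` in rows `1..r`, columns `1..r`, and `I_s` in rows `r+1..r+s`,
columns `r+1..r+s`. -/
def canonA (F : Type*) [Field F] (m p r s : ℕ) : Matrix (Fin m) (Fin p) F :=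
  Matrix.of fun i j => if (i : ℕ) = (j : ℕ) ∧ (i : ℕ) < r + s then 1 else 0

/-- The B-block of the canonical bipartite matrix `C(r,s,t)`:
`I_r` in rows `1..r`, columns `t+1..t+r`, and `I_t` in rows `r+s+1..r+s+t`,
columns `1..t`. -/
def canonB (F : Type*) [Field F] (m q r s t : ℕ) : Matrix (Fin m) (Fin q) F :=
  Matrix.of fun i k =>
    if ((i : ℕ) < r ∧ (k : ℕ) = t + (i : ℕ)) ∨
       (r + s ≤ (i : ℕ) ∧ (i : ℕ) < r + s + t ∧ (k : ℕ) + (r + s) = (i : ℕ)) then 1 else 0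

/-- A matchbox: a set of pattern positions, no two sharing a row index and no two
within the same block sharing a column index. -/
def IsMatchbox {m p q n : ℕ} (pos : Fin n → BipPos m p q) (S : Finset (Fin n)) : Prop :=
  ∀ l ∈ S, ∀ l' ∈ S, l ≠ l' →
    posRow (pos l) ≠ posRow (pos l') ∧ posCol (pos l) ≠ posCol (pos l')

/-- A left matchbox: a matchbox all of whose positions lie in the A-block. -/
def IsLeftMatchbox {m p q n : ℕ} (pos : Fin n → BipPos m p q) (S : Finset (Fin n)) : Prop :=
  IsMatchbox pos S ∧ ∀ l ∈ S, (pos l).isLeft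

/-- A right matchbox: a matchbox all of whose positions lie in the B-block. -/
def IsRightMatchbox {m p q n : ℕ} (pos : Fin n → BipPos m p q) (S : Finset (Fin n)) : Prop :=
  IsMatchbox pos S ∧ ∀ l ∈ S, (pos l).isRight

/-- A largest left matchbox. -/
def IsLargestLeft {m p q n : ℕ} (pos : Fin n → BipPos m p q) (S : Finset (Fin n)) : Prop :=
  IsLeftMatchbox pos S ∧ ∀ T : Finset (Fin n), IsLeftMatchbox pos T → T.card ≤ S.card

/-- A largest right matchbox. -/
def IsLargestRight {m p q n : ℕ} (pos : Fin n → BipPos m p q) (S : Finset (Fin n)) : Prop :=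
  IsRightMatchbox pos S ∧ ∀ T : Finset (Fin n), IsRightMatchbox pos T → T.card ≤ S.card

/-- The set of row indices met by the positions of `S`. -/
def rowSet {m p q n : ℕ} (pos : Fin n → BipPos m p q) (S : Finset (Fin n)) : Finset (Fin m) :=
  S.image fun l => posRow (pos l)

/-- `v(𝒜,ℬ)`: the number of row indices met by both `𝒜` and `ℬ`. -/
def vCommon {m p q n : ℕ} (pos : Fin n → BipPos m p q) (𝒜 ℬ : Finset (Fin n)) : ℕ :=
  (rowSet pos 𝒜 ∩ rowSet pos ℬ).card

/-- `𝒜 ⋓ ℬ`: `𝒜` together with those positions of `ℬ` whose row is not a row of `𝒜`. -/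
def mcup {m p q n : ℕ} (pos : Fin n → BipPos m p q) (𝒜 ℬ : Finset (Fin n)) : Finset (Fin n) :=
  𝒜 ∪ ℬ.filter fun l => posRow (pos l) ∉ rowSet pos 𝒜

/-- An optimal pair: a largest left matchbox and a largest right matchbox whose number of
common row indices is minimal among all such pairs. -/
def IsOptimalPair {m p q n : ℕ} (pos : Fin n → BipPos m p q) (𝒜 ℬ : Finset (Fin n)) : Prop :=
  IsLargestLeft pos 𝒜 ∧ IsLargestRight pos ℬ ∧
  ∀ 𝒜' ℬ' : Finset (Fin n), IsLargestLeft pos 𝒜' → IsLargestRight pos ℬ' →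
    vCommon pos 𝒜 ℬ ≤ vCommon pos 𝒜' ℬ'

/-- The characteristic vector `ε_S ∈ {0,1}ⁿ` of a set of labels. -/
def charVec (F : Type*) [Zero F] [One F] {n : ℕ} (S : Finset (Fin n)) : Fin n → F :=
  fun l => if l ∈ S then 1 else 0

/-- The minor `μ_S(x)` of `M(x)` on the rows and the columns met by the matchbox `S`
(as a polynomial; well defined up to sign, rows and columns being indexed by `S`). -/
noncomputable def minorX (F : Type*) [Field F] {m p q n : ℕ} (pos : Fin n → BipPos m p q)
    (S : Finset (Fin n)) : MvPolynomial (Fin n) F :=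
  (Matrix.of fun (l : S) (l' : S) =>
    patM pos (fun i => (MvPolynomial.X i : MvPolynomial (Fin n) F))
      (posRow (pos l)) (posCol (pos l'))).det


/-!
Specialisation never raises the rank, so only the lower bounds need `f(a) ≠ 0`: it keeps the
minors `μ_𝒜`, `μ_ℬ`, `μ_{𝒜⋓ℬ}` nonzero at `a`, whence `rank A(a) ≥ |𝒜|`, `rank B(a) ≥ |ℬ|` and
`rank M(a) ≥ |𝒜 ⋓ ℬ| = |𝒜| + |ℬ| - v(𝒜,ℬ)`.

For the generic ranks: a nonzero term in the Leibniz expansion of a nonzero minor is a matchbox,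
and conversely the minor of a matchbox `S` is the identity matrix at the characteristic vector
`ε_S`. Hence `r_A = |𝒜|`, and the row sets of left matchboxes are exactly the independent row
sets of `A(x)`; extending an independent set to a basis shows that the rows of any left matchbox
lie among the rows of a largest one. Splitting a matchbox `T` with `|T| = r_M` into its left and
right parts and extending both to largest matchboxes `𝒜'`, `ℬ'` gives
`v(𝒜,ℬ) ≤ v(𝒜',ℬ') ≤ |𝒜| + |ℬ| - |T|`.
-/

section RowIndependence
variable {K : Type*} [Field K] {m n ι : Type*}

theorem Matrix.card_le_rank_of_det_submatrix_ne_zero [Fintype n] [Fintype ι] [DecidableEq ι]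
    (A : Matrix m n K) {f : ι → m} {g : ι → n} (h : (A.submatrix f g).det ≠ 0) :
    Fintype.card ι ≤ A.rank :=
  (rank_of_det_ne_zero h).symm.le.trans (rank_submatrix_le A f g)

theorem Matrix.injective_of_det_submatrix_ne_zero {R : Type*} [CommRing R] [Fintype ι]
    [DecidableEq ι] (A : Matrix m n R) {f : ι → m} {g : ι → n} (h : (A.submatrix f g).det ≠ 0) :
    Function.Injective f ∧ Function.Injective g := by
  refine ⟨fun i j hij => ?_, fun i j hij => ?_⟩ <;> by_contra hne
  · exact h (det_zero_of_row_eq hne (by ext k; simp [hij]))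
  · exact h (det_zero_of_column_eq hne (by simp [hij]))

theorem Matrix.linearIndependent_row_comp_of_det_submatrix_ne_zero [Fintype ι] [DecidableEq ι]
    (A : Matrix m n K) {f : ι → m} {g : ι → n} (h : (A.submatrix f g).det ≠ 0) :
    LinearIndependent K (A.row ∘ f) :=
  LinearIndependent.of_comp (LinearMap.funLeft K K g)
    (linearIndependent_rows_iff_isUnit.2 ((isUnit_iff_isUnit_det _).2 h.isUnit))

theorem Matrix.exists_linearIndepOn_row_superset_card_eq_rank [Fintype m] [Fintype n]
    (A : Matrix m n K) {W₀ : Finset m} (h : LinearIndepOn K A.row (W₀ : Set m)) :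
    ∃ W : Finset m, W₀ ⊆ W ∧ LinearIndepOn K A.row (W : Set m) ∧ W.card = A.rank := by
  obtain ⟨b, -, hW₀b, hspan, hb⟩ := exists_linearIndepOn_extension h (Set.subset_univ _)
  lift b to Finset m using b.toFinite
  refine ⟨b, by exact_mod_cast hW₀b, hb, ?_⟩
  have hrange : Submodule.span K (Set.range A.row) = Submodule.span K (A.row '' b) :=
    le_antisymm (Submodule.span_le.2 (by simpa using hspan))
      (Submodule.span_mono (Set.image_subset_range _ _))
  rw [rank_eq_finrank_span_row, hrange, Set.image_eq_range, finrank_span_eq_card hb]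
  simp

theorem Matrix.exists_det_submatrix_ne_zero_of_linearIndepOn [DecidableEq m] [Fintype n]
    (A : Matrix m n K) {W : Finset m} (h : LinearIndepOn K A.row (W : Set m)) :
    ∃ g : W → n, (A.submatrix (↑) g).det ≠ 0 := by
  classical
  set B : Matrix W n K := A.submatrix (↑) id
  have hB : Bᵀ.rank = W.card := by
    rw [rank_transpose, LinearIndependent.rank_matrix (M := B) h, Fintype.card_coe]
  obtain ⟨V, -, hV, hVcard⟩ :=
    Bᵀ.exists_linearIndepOn_row_superset_card_eq_rank (W₀ := ∅) (by simp)
  let e : W ≃ V := Fintype.equivOfCardEq (by rw [Fintype.card_coe, Fintype.card_coe, hVcard, hB])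
  refine ⟨fun w => e w, ?_⟩
  have hrows : LinearIndependent K (A.submatrix Subtype.val fun w => (e w : n))ᵀ.row :=
    hV.comp e e.injective
  rw [← det_transpose]
  exact ((isUnit_iff_isUnit_det _).1 (linearIndependent_rows_iff_isUnit.1 hrows)).ne_zero

theorem Matrix.exists_det_submatrix_ne_zero_card_eq_rank [Fintype m] [DecidableEq m] [Fintype n]
    (A : Matrix m n K) : ∃ (W : Finset m) (g : W → n), W.card = A.rank ∧
      (A.submatrix (↑) g).det ≠ 0 := by
  obtain ⟨W, -, hW, hcard⟩ := A.exists_linearIndepOn_row_superset_card_eq_rank (W₀ := ∅) (by simp)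
  obtain ⟨g, hg⟩ := A.exists_det_submatrix_ne_zero_of_linearIndepOn hW
  exact ⟨W, g, hcard, hg⟩

end RowIndependence

section Specialization
variable {R S T m n ι : Type*} [CommRing R] [CommRing S] [CommRing T]

theorem Matrix.det_submatrix_map_ne_zero_of_injective [Fintype ι] [DecidableEq ι]
    (E : Matrix m n R) (φ : R →+* S) {ψ : R →+* T} (hψ : Function.Injective ψ) {f : ι → m}
    {g : ι → n} (h : ((E.map φ).submatrix f g).det ≠ 0) : ((E.map ψ).submatrix f g).det ≠ 0 := by
  rw [submatrix_map, ← RingHom.mapMatrix_apply, ← RingHom.map_det] at h ⊢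
  exact (map_ne_zero_iff ψ hψ).2 fun h0 => h (by rw [h0, map_zero])

theorem Matrix.rank_map_le_of_injective [Fintype m] [DecidableEq m] [Fintype n] {K₁ K₂ : Type*}
    [Field K₁] [Field K₂] (E : Matrix m n R) (φ : R →+* K₁) {ψ : R →+* K₂}
    (hψ : Function.Injective ψ) : (E.map φ).rank ≤ (E.map ψ).rank := by
  obtain ⟨W, g, hW, hdet⟩ := (E.map φ).exists_det_submatrix_ne_zero_card_eq_rank
  rw [← hW, ← Fintype.card_coe]
  exact card_le_rank_of_det_submatrix_ne_zero _ (det_submatrix_map_ne_zero_of_injective E φ hψ hdet)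

end Specialization

section Pattern
variable {m p q n : ℕ}

theorem posRow_swap (x : BipPos m p q) : posRow x.swap = posRow x := by
  cases x <;> rfl

theorem posCol_swap (x : BipPos m p q) : posCol x.swap = (posCol x).swap := by
  cases x <;> rfl

theorem BipPos.ext_iff {x y : BipPos m p q} :
    x = y ↔ posRow x = posRow y ∧ posCol x = posCol y := by
  refine ⟨fun h => h ▸ ⟨rfl, rfl⟩, fun h => ?_⟩
  rcases x with ⟨i, j⟩ | ⟨i, j⟩ <;> rcases y with ⟨i', j'⟩ | ⟨i', j'⟩ <;>
    simp_all [posRow, posCol]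

variable (pos : Fin n → BipPos m p q) {R S : Type*} [CommRing R] [CommRing S]

theorem patM_apply (a : Fin n → R) (i : Fin m) (c : Fin p ⊕ Fin q) :
    patM pos a i c = ∑ l, if posRow (pos l) = i ∧ posCol (pos l) = c then a l else 0 := by
  rcases c with j | k <;>
    simp only [patM, patA, patB, fromCols_apply_inl, fromCols_apply_inr, of_apply] <;>
    refine Finset.sum_congr rfl fun l _ => if_congr ?_ rfl rfl <;>
    simp [BipPos.ext_iff, posRow, posCol]

theorem exists_label_of_patM_ne_zero {a : Fin n → R} {i : Fin m} {c : Fin p ⊕ Fin q}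
    (h : patM pos a i c ≠ 0) : ∃ l, posRow (pos l) = i ∧ posCol (pos l) = c := by
  rw [patM_apply] at h
  obtain ⟨l, -, hl⟩ := Finset.exists_ne_zero_of_sum_ne_zero h
  exact ⟨l, by_contra fun hne => hl (if_neg hne)⟩

theorem patA_map (φ : R →+* S) (x : Fin n → R) : (patA pos x).map φ = patA pos (φ ∘ x) := by
  ext i j
  simp [patA, apply_ite φ]

theorem patM_map (φ : R →+* S) (x : Fin n → R) : (patM pos x).map φ = patM pos (φ ∘ x) := by
  ext i c
  simp [patM_apply, apply_ite φ]

theorem patB_eq_patA_swap (a : Fin n → R) : patB pos a = patA (Sum.swap ∘ pos) a := by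
  ext i k
  simp only [patA, patB, of_apply, Function.comp_apply]
  congr! 2 with l
  rcases pos l with _ | _ <;> simp

end Pattern

section Matchbox
variable {m p q n : ℕ} (pos : Fin n → BipPos m p q) {R : Type*} [CommRing R]

/-- The matrix whose determinant is `μ_S(a)`; its rows and columns are indexed by `S` itself. -/
def matchboxSubmatrix (a : Fin n → R) (S : Finset (Fin n)) : Matrix S S R :=
  (patM pos a).submatrix (fun l : S => posRow (pos l)) (fun l : S => posCol (pos l))

theorem exists_matchbox_of_det_ne_zero {ι : Type*} [Fintype ι] [DecidableEq ι] {a : Fin n → R}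
    {f : ι → Fin m} {g : ι → Fin p ⊕ Fin q} (h : ((patM pos a).submatrix f g).det ≠ 0) :
    ∃ T, IsMatchbox pos T ∧ T.card = Fintype.card ι ∧ rowSet pos T = Finset.univ.image f ∧
      ∀ l ∈ T, posCol (pos l) ∈ Set.range g := by
  obtain ⟨hf, hg⟩ := (patM pos a).injective_of_det_submatrix_ne_zero h
  rw [det_apply] at h
  obtain ⟨σ, -, hσ⟩ := Finset.exists_ne_zero_of_sum_ne_zero h
  have hentry (i : ι) : patM pos a (f (σ i)) (g i) ≠ 0 := fun h0 =>
    hσ (by rw [Finset.prod_eq_zero (Finset.mem_univ i) h0, smul_zero])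
  choose lab hrow hcol using fun i => exists_label_of_patM_ne_zero pos (hentry i)
  have hlab : Function.Injective lab := fun i i' h => hg (by rw [← hcol, ← hcol, h])
  refine ⟨Finset.univ.image lab, ?_, ?_, ?_, ?_⟩
  · simp only [IsMatchbox, Finset.mem_image, Finset.mem_univ, true_and]
    rintro _ ⟨i, rfl⟩ _ ⟨i', rfl⟩ hne
    have hii : i ≠ i' := fun h => hne (congrArg lab h)
    rw [hrow, hrow, hcol, hcol]
    exact ⟨(hf.comp σ.injective).ne hii, hg.ne hii⟩
  · rw [Finset.card_image_of_injective _ hlab, Finset.card_univ]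
  · ext r
    simp only [rowSet, Finset.image_image, Finset.mem_image, Finset.mem_univ, true_and,
      Function.comp_apply, hrow]
    exact ⟨fun ⟨i, hi⟩ => ⟨σ i, hi⟩, fun ⟨i, hi⟩ => ⟨σ.symm i, by simpa using hi⟩⟩
  · simp [hcol]

theorem minorX_eq_det (F : Type*) [Field F] (S : Finset (Fin n)) :
    minorX F pos S = (matchboxSubmatrix pos MvPolynomial.X S).det :=
  rfl

theorem IsMatchbox.matchboxSubmatrix_charVec {S : Finset (Fin n)} (hS : IsMatchbox pos S) :
    matchboxSubmatrix pos (charVec R S) S = 1 := by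
  ext l l'
  rw [matchboxSubmatrix, submatrix_apply, patM_apply, Finset.sum_eq_single (l : Fin n)]
  · by_cases hll : l = l'
    · subst hll
      simp [charVec]
    · rw [one_apply_ne hll, if_neg]
      exact fun h => (hS l l.2 l' l'.2 (Subtype.coe_injective.ne hll)).2 h.2
  · intro l'' _ hne
    split_ifs with hc
    · simp only [charVec, ite_eq_right_iff]
      exact fun hl'' => absurd hc.1 (hS _ hl'' _ l.2 hne).1
    · rfl
  · simp

theorem IsLeftMatchbox.exists_col {S : Finset (Fin n)} (hS : IsLeftMatchbox pos S) :
    ∃ c : S → Fin p, ∀ l : S, posCol (pos l) = Sum.inl (c l) := by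
  have hcol (l : S) : ∃ j, posCol (pos l) = Sum.inl j := by
    obtain ⟨⟨i, j⟩, h⟩ := Sum.isLeft_iff.1 (hS.2 l l.2)
    exact ⟨j, by rw [h]; rfl⟩
  choose c hc using hcol
  exact ⟨c, hc⟩

theorem matchboxSubmatrix_eq_submatrix_patA {S : Finset (Fin n)} {c : S → Fin p}
    (hc : ∀ l : S, posCol (pos l) = Sum.inl (c l)) (a : Fin n → R) :
    matchboxSubmatrix pos a S = (patA pos a).submatrix (fun l : S => posRow (pos l)) c := by
  ext l l'
  simp [matchboxSubmatrix, hc, patM]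

end Matchbox

section Generic
variable {F : Type*} [Field F] {m p q n : ℕ} (pos : Fin n → BipPos m p q)

local notation "toFrac" =>
  algebraMap (MvPolynomial (Fin n) F) (FractionRing (MvPolynomial (Fin n) F))

theorem patA_eq_map_eval (a : Fin n → F) :
    patA pos a = (patA pos MvPolynomial.X).map (MvPolynomial.eval a) := by
  rw [patA_map]
  congr
  ext l
  simp

theorem patM_eq_map_eval (a : Fin n → F) :
    patM pos a = (patM pos MvPolynomial.X).map (MvPolynomial.eval a) := by
  rw [patM_map]
  congr
  ext l
  simp

theorem patA_genericX :
    patA pos (genericX F n) = (patA pos MvPolynomial.X).map toFrac := by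
  rw [patA_map]
  rfl

theorem patM_genericX :
    patM pos (genericX F n) = (patM pos MvPolynomial.X).map toFrac := by
  rw [patM_map]
  rfl

theorem rank_patA_le_genRankA (a : Fin n → F) : (patA pos a).rank ≤ genRankA F pos := by
  rw [genRankA, patA_eq_map_eval, patA_genericX]
  exact rank_map_le_of_injective _ _ (IsFractionRing.injective _ _)

theorem rank_patM_le_genRankM (a : Fin n → F) : (patM pos a).rank ≤ genRankM F pos := by
  rw [genRankM, patM_eq_map_eval, patM_genericX]
  exact rank_map_le_of_injective _ _ (IsFractionRing.injective _ _)

theorem det_submatrix_patA_genericX_ne_zero {ι : Type*} [Fintype ι] [DecidableEq ι]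
    {a : Fin n → F} {f : ι → Fin m} {g : ι → Fin p} (h : ((patA pos a).submatrix f g).det ≠ 0) :
    ((patA pos (genericX F n)).submatrix f g).det ≠ 0 := by
  rw [patA_eq_map_eval] at h
  rw [patA_genericX]
  exact det_submatrix_map_ne_zero_of_injective _ _ (IsFractionRing.injective _ _) h

theorem eval_minorX (a : Fin n → F) (S : Finset (Fin n)) :
    MvPolynomial.eval a (minorX F pos S) = (matchboxSubmatrix pos a S).det := by
  rw [minorX_eq_det, RingHom.map_det, matchboxSubmatrix, matchboxSubmatrix, patM_eq_map_eval pos a,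
    RingHom.mapMatrix_apply, submatrix_map]

end Generic

section LeftMatchbox
variable {m p q n : ℕ} {pos : Fin n → BipPos m p q}

theorem IsLeftMatchbox.card_le_rank_patA {K : Type*} [Field K] {S : Finset (Fin n)}
    (hS : IsLeftMatchbox pos S) {a : Fin n → K} (h : (matchboxSubmatrix pos a S).det ≠ 0) :
    S.card ≤ (patA pos a).rank := by
  obtain ⟨c, hc⟩ := hS.exists_col
  rw [matchboxSubmatrix_eq_submatrix_patA pos hc] at h
  simpa using card_le_rank_of_det_submatrix_ne_zero _ h

theorem IsLeftMatchbox.card_le_genRankA (F : Type*) [Field F] {S : Finset (Fin n)}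
    (hS : IsLeftMatchbox pos S) : S.card ≤ genRankA F pos :=
  (hS.card_le_rank_patA (a := charVec F S)
    (by simp [hS.1.matchboxSubmatrix_charVec])).trans (rank_patA_le_genRankA pos _)

theorem IsLeftMatchbox.exists_card_eq_genRankA_rowSet_subset (F : Type*) [Field F]
    {T : Finset (Fin n)} (hT : IsLeftMatchbox pos T) :
    ∃ 𝒜', IsLeftMatchbox pos 𝒜' ∧ 𝒜'.card = genRankA F pos ∧ rowSet pos T ⊆ rowSet pos 𝒜' := by
  obtain ⟨c, hc⟩ := hT.exists_col
  set A := patA pos (genericX F n)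
  have hdet : (A.submatrix (fun l : T => posRow (pos l)) c).det ≠ 0 := by
    have h1 := hT.1.matchboxSubmatrix_charVec (R := F)
    rw [matchboxSubmatrix_eq_submatrix_patA pos hc] at h1
    exact det_submatrix_patA_genericX_ne_zero pos (a := charVec F T) (by simp [h1])
  have hind : LinearIndepOn (FractionRing (MvPolynomial (Fin n) F)) A.row
      (rowSet pos T : Set (Fin m)) := by
    rw [rowSet, Finset.coe_image, Set.image_eq_range]
    exact (linearIndepOn_range_iff (A.injective_of_det_submatrix_ne_zero hdet).1 _).2
      (A.linearIndependent_row_comp_of_det_submatrix_ne_zero hdet)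
  obtain ⟨W, hTW, hW, hWcard⟩ := A.exists_linearIndepOn_row_superset_card_eq_rank hind
  obtain ⟨g, hg⟩ := A.exists_det_submatrix_ne_zero_of_linearIndepOn hW
  obtain ⟨𝒜', h𝒜', hcard, hrow, hcol⟩ :=
    exists_matchbox_of_det_ne_zero pos (f := Subtype.val) (g := Sum.inl ∘ g) hg
  refine ⟨𝒜', ⟨h𝒜', fun l hl => ?_⟩, by rw [hcard, Fintype.card_coe, hWcard]; rfl, ?_⟩
  · obtain ⟨w, hw⟩ := hcol l hl
    cases hpl : pos l with
    | inl _ => rfl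
    | inr _ => simp [hpl, posCol] at hw
  · rw [hrow]
    simpa using hTW

theorem IsLargestLeft.card_eq_genRankA (F : Type*) [Field F] {𝒜 : Finset (Fin n)}
    (h𝒜 : IsLargestLeft pos 𝒜) : 𝒜.card = genRankA F pos := by
  have hempty : IsLeftMatchbox pos ∅ := by simp [IsLeftMatchbox, IsMatchbox]
  obtain ⟨𝒜', h𝒜', hcard, -⟩ := hempty.exists_card_eq_genRankA_rowSet_subset F
  exact le_antisymm (h𝒜.1.card_le_genRankA F) (hcard ▸ h𝒜.2 𝒜' h𝒜')

theorem IsLeftMatchbox.exists_isLargestLeft_rowSet_subset {T : Finset (Fin n)}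
    (hT : IsLeftMatchbox pos T) : ∃ 𝒜', IsLargestLeft pos 𝒜' ∧ rowSet pos T ⊆ rowSet pos 𝒜' := by
  obtain ⟨𝒜', h𝒜', hcard, hsub⟩ := hT.exists_card_eq_genRankA_rowSet_subset ℚ
  exact ⟨𝒜', ⟨h𝒜', fun S hS => hcard ▸ hS.card_le_genRankA ℚ⟩, hsub⟩

theorem IsLargestLeft.rank_patA_eq_genRankA {F : Type*} [Field F] {𝒜 : Finset (Fin n)}
    (h𝒜 : IsLargestLeft pos 𝒜) {a : Fin n → F} (ha : (matchboxSubmatrix pos a 𝒜).det ≠ 0) :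
    (patA pos a).rank = genRankA F pos :=
  le_antisymm (rank_patA_le_genRankA pos a)
    ((h𝒜.card_eq_genRankA F).symm.le.trans (h𝒜.1.card_le_rank_patA ha))

end LeftMatchbox

section RightMatchbox
variable {m p q n : ℕ} {pos : Fin n → BipPos m p q}

theorem isMatchbox_swap_comp {S : Finset (Fin n)} :
    IsMatchbox (Sum.swap ∘ pos) S ↔ IsMatchbox pos S := by
  simp only [IsMatchbox, Function.comp_apply, posRow_swap, posCol_swap,
    Sum.swap_leftInverse.injective.ne_iff]

theorem isLargestLeft_swap_comp {S : Finset (Fin n)} :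
    IsLargestLeft (Sum.swap ∘ pos) S ↔ IsLargestRight pos S := by
  simp [IsLargestLeft, IsLargestRight, IsLeftMatchbox, IsRightMatchbox, isMatchbox_swap_comp]

theorem rowSet_swap_comp (S : Finset (Fin n)) : rowSet (Sum.swap ∘ pos) S = rowSet pos S := by
  simp [rowSet, posRow_swap]

theorem matchboxSubmatrix_swap_comp {R : Type*} [CommRing R] (a : Fin n → R)
    (S : Finset (Fin n)) : matchboxSubmatrix (Sum.swap ∘ pos) a S = matchboxSubmatrix pos a S := by
  ext l l'
  simp only [matchboxSubmatrix, submatrix_apply, patM_apply, Function.comp_apply, posRow_swap,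
    posCol_swap, Sum.swap_leftInverse.injective.eq_iff]

theorem IsRightMatchbox.exists_isLargestRight_rowSet_subset {T : Finset (Fin n)}
    (hT : IsRightMatchbox pos T) : ∃ ℬ', IsLargestRight pos ℬ' ∧ rowSet pos T ⊆ rowSet pos ℬ' := by
  have hT' : IsLeftMatchbox (Sum.swap ∘ pos) T :=
    ⟨isMatchbox_swap_comp.2 hT.1, fun l hl => by simpa using hT.2 l hl⟩
  simpa [isLargestLeft_swap_comp, rowSet_swap_comp] using hT'.exists_isLargestLeft_rowSet_subset

theorem IsLargestRight.rank_patB_eq_genRankB {F : Type*} [Field F] {ℬ : Finset (Fin n)}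
    (hℬ : IsLargestRight pos ℬ) {a : Fin n → F} (ha : (matchboxSubmatrix pos a ℬ).det ≠ 0) :
    (patB pos a).rank = genRankB F pos := by
  rw [genRankB, patB_eq_patA_swap, patB_eq_patA_swap]
  exact (isLargestLeft_swap_comp.2 hℬ).rank_patA_eq_genRankA
    (by rwa [matchboxSubmatrix_swap_comp])

end RightMatchbox

theorem Finset.card_inter_add_card_add_card_le {α : Type*} [DecidableEq α] {X Y P Q : Finset α}
    (hP : P ⊆ X) (hQ : Q ⊆ Y) (hPQ : Disjoint P Q) :
    (X ∩ Y).card + P.card + Q.card ≤ X.card + Y.card := by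
  have hXY := card_union_add_card_inter X Y
  have hPQcard := card_union_of_disjoint hPQ
  have hsub := card_le_card (union_subset_union hP hQ)
  omega

section Optimal
variable {m p q n : ℕ} {pos : Fin n → BipPos m p q}

theorem IsMatchbox.card_rowSet {S : Finset (Fin n)} (hS : IsMatchbox pos S) :
    (rowSet pos S).card = S.card :=
  Finset.card_image_of_injOn fun l hl l' hl' h => by_contra fun hne => (hS l hl l' hl' hne).1 h

theorem IsMatchbox.subset {S T : Finset (Fin n)} (hS : IsMatchbox pos S) (hT : T ⊆ S) :
    IsMatchbox pos T :=
  fun l hl l' hl' hne => hS l (hT hl) l' (hT hl') hne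

theorem card_mcup_add_vCommon (𝒜 : Finset (Fin n)) {ℬ : Finset (Fin n)} (hℬ : IsMatchbox pos ℬ) :
    (mcup pos 𝒜 ℬ).card + vCommon pos 𝒜 ℬ = 𝒜.card + ℬ.card := by
  set inA := fun l => posRow (pos l) ∈ rowSet pos 𝒜
  have hdisj : Disjoint 𝒜 (ℬ.filter fun l => ¬ inA l) :=
    Finset.disjoint_left.2 fun l hl hl' =>
      (Finset.mem_filter.1 hl').2 (Finset.mem_image_of_mem _ hl)
  have hcommon : rowSet pos 𝒜 ∩ rowSet pos ℬ = rowSet pos (ℬ.filter inA) := by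
    ext i
    simp only [rowSet, Finset.mem_inter, Finset.mem_image, Finset.mem_filter, inA]
    constructor
    · rintro ⟨hi, l, hl, rfl⟩
      exact ⟨l, ⟨hl, hi⟩, rfl⟩
    · rintro ⟨l, ⟨hl, hi⟩, rfl⟩
      exact ⟨hi, l, hl, rfl⟩
  rw [mcup, Finset.card_union_of_disjoint hdisj, vCommon, hcommon,
    (hℬ.subset (Finset.filter_subset _ _)).card_rowSet,
    ← Finset.card_filter_add_card_filter_not (s := ℬ) inA]
  omega

theorem IsOptimalPair.card_add_vCommon_le {𝒜 ℬ T : Finset (Fin n)}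
    (hopt : IsOptimalPair pos 𝒜 ℬ) (hT : IsMatchbox pos T) :
    T.card + vCommon pos 𝒜 ℬ ≤ 𝒜.card + ℬ.card := by
  set TA := T.filter fun l => (pos l).isLeft
  set TB := T.filter fun l => ¬ (pos l).isLeft
  have hTA : IsLeftMatchbox pos TA :=
    ⟨hT.subset (Finset.filter_subset _ _), fun l hl => (Finset.mem_filter.1 hl).2⟩
  have hTB : IsRightMatchbox pos TB :=
    ⟨hT.subset (Finset.filter_subset _ _), fun l hl => Sum.not_isLeft.1 (Finset.mem_filter.1 hl).2⟩
  have hdisj : Disjoint (rowSet pos TA) (rowSet pos TB) := by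
    simp only [rowSet, Finset.disjoint_left, Finset.mem_image, Finset.mem_filter, TA, TB]
    rintro _ ⟨l, ⟨hl, hleft⟩, rfl⟩ ⟨l', ⟨hl', hright⟩, hrow⟩
    exact (hT l' hl' l hl (by rintro rfl; exact hright hleft)).1 hrow
  obtain ⟨𝒜', h𝒜', hA⟩ := hTA.exists_isLargestLeft_rowSet_subset
  obtain ⟨ℬ', hℬ', hB⟩ := hTB.exists_isLargestRight_rowSet_subset
  have hcount := Finset.card_inter_add_card_add_card_le hA hB hdisj
  rw [hTA.1.card_rowSet, hTB.1.card_rowSet, h𝒜'.1.1.card_rowSet, hℬ'.1.1.card_rowSet] at hcount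
  have h𝒜'card : 𝒜'.card = 𝒜.card := le_antisymm (hopt.1.2 _ h𝒜'.1) (h𝒜'.2 _ hopt.1.1)
  have hℬ'card : ℬ'.card = ℬ.card := le_antisymm (hopt.2.1.2 _ hℬ'.1) (hℬ'.2 _ hopt.2.1.1)
  have hsplit : TA.card + TB.card = T.card := Finset.card_filter_add_card_filter_not _
  have hv : vCommon pos 𝒜 ℬ ≤ (rowSet pos 𝒜' ∩ rowSet pos ℬ').card := hopt.2.2 𝒜' ℬ' h𝒜' hℬ'
  omega

theorem IsOptimalPair.genRankM_le_card_mcup (F : Type*) [Field F] {𝒜 ℬ : Finset (Fin n)}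
    (hopt : IsOptimalPair pos 𝒜 ℬ) : genRankM F pos ≤ (mcup pos 𝒜 ℬ).card := by
  obtain ⟨W, g, hW, hdet⟩ := (patM pos (genericX F n)).exists_det_submatrix_ne_zero_card_eq_rank
  obtain ⟨T, hT, hTcard, -⟩ := exists_matchbox_of_det_ne_zero pos hdet
  have hle := hopt.card_add_vCommon_le hT
  have heq := card_mcup_add_vCommon 𝒜 hopt.2.1.1.1
  rw [Fintype.card_coe] at hTcard
  rw [genRankM, ← hW]
  omega

end Optimal

theorem stmt_8_general (F : Type*) [Field F] (m p q n : ℕ) (pos : Fin n → BipPos m p q)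
    (𝒜 ℬ : Finset (Fin n))
    (hopt : IsOptimalPair pos 𝒜 ℬ)
    (f : MvPolynomial (Fin n) F)
    (hdvd1 : minorX F pos 𝒜 ∣ f) (hdvd2 : minorX F pos ℬ ∣ f)
    (hdvd3 : minorX F pos (mcup pos 𝒜 ℬ) ∣ f) :
    ∀ a : Fin n → F, MvPolynomial.eval a f ≠ 0 →
      (patA pos a).rank = genRankA F pos ∧
      (patB pos a).rank = genRankB F pos ∧
      (patM pos a).rank = genRankM F pos := by
  intro a hfa
  have hminor {S : Finset (Fin n)} (hS : minorX F pos S ∣ f) :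
      (matchboxSubmatrix pos a S).det ≠ 0 := by
    rw [← eval_minorX]
    exact ne_zero_of_dvd_ne_zero hfa (map_dvd (MvPolynomial.eval a) hS)
  refine ⟨hopt.1.rank_patA_eq_genRankA (hminor hdvd1),
    hopt.2.1.rank_patB_eq_genRankB (hminor hdvd2),
    le_antisymm (rank_patM_le_genRankM pos a) ?_⟩
  calc genRankM F pos ≤ (mcup pos 𝒜 ℬ).card := hopt.genRankM_le_card_mcup F
    _ ≤ (patM pos a).rank := by
      simpa using card_le_rank_of_det_submatrix_ne_zero _ (hminor hdvd3)

/-- Lemma 6: for an optimal pair `(𝒜, ℬ)` of largest matchboxes and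
any lowest common multiple `f` of `μ_𝒜`, `μ_ℬ`, `μ_{𝒜⋓ℬ}` (expressed by the usual
divisibility characterization of an LCM), every `a` with `f(a) ≠ 0` satisfies
`rank A(a) = r_A`, `rank B(a) = r_B`, `rank M(a) = r_M`. -/
theorem stmt_8 (F : Type*) [Field F] (m p q n : ℕ) (pos : Fin n → BipPos m p q)
    (hpos : Function.Injective pos) (𝒜 ℬ : Finset (Fin n))
    (hopt : IsOptimalPair pos 𝒜 ℬ)
    (f : MvPolynomial (Fin n) F)
    (hdvd1 : minorX F pos 𝒜 ∣ f) (hdvd2 : minorX F pos ℬ ∣ f)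
    (hdvd3 : minorX F pos (mcup pos 𝒜 ℬ) ∣ f)
    (hlcm : ∀ g : MvPolynomial (Fin n) F, minorX F pos 𝒜 ∣ g → minorX F pos ℬ ∣ g →
      minorX F pos (mcup pos 𝒜 ℬ) ∣ g → f ∣ g) :
    ∀ a : Fin n → F, MvPolynomial.eval a f ≠ 0 →
      (patA pos a).rank = genRankA F pos ∧
      (patB pos a).rank = genRankB F pos ∧
      (patM pos a).rank = genRankM F pos :=
  stmt_8_general F m p q n pos 𝒜 ℬ hopt f hdvd1 hdvd2 hdvd3
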